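/- Suppose (Γᵢ₊₁, κᵢ₊₁) is obtained from (Γᵢ, κᵢ) by applying one of TC1, TC2 or TC3, where Γᵢ = (Nᵢ, Eᵢ) is a word graph in which every node is reachable from 0 and which satisfies (0)π_{Γᵢ} ⊆ ρ and (0)π_{Γᵢ/κᵢ} ⊆ ρ. Then (0)π_{Γᵢ} ⊆ (0)π_{Γᵢ₊₁} ⊆ ρ and (0)π_{Γᵢ/κᵢ} ⊆ (0)π_{Γᵢ₊₁/κᵢ₊₁} ⊆ ρ. -/
import Mathlib


namespace TC

/-- A word graph over the alphabet `A`: a set of nodes (natural numbers) and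
labelled edges. -/
structure WordGraph (A : Type*) where
  nodes : Set ℕ
  edges : Set (ℕ × A × ℕ)

namespace WordGraph

variable {A : Type*}

/-- The conditions for `Γ` to really be a word graph: finitely many nodes,
`0` is a node, and the source and target of every edge are nodes. -/
def Valid (Γ : WordGraph A) : Prop :=
  Γ.nodes.Finite ∧ 0 ∈ Γ.nodes ∧
    ∀ e ∈ Γ.edges, e.1 ∈ Γ.nodes ∧ e.2.2 ∈ Γ.nodes

/-- `IsPath Γ α w β` means that the word `w` labels an `(α, β)`-path in `Γ`. -/
inductive IsPath (Γ : WordGraph A) : ℕ → List A → ℕ → Prop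
  | nil {α : ℕ} : α ∈ Γ.nodes → IsPath Γ α [] α
  | cons {α β γ : ℕ} {a : A} {w : List A} :
      (α, a, β) ∈ Γ.edges → IsPath Γ β w γ → IsPath Γ α (a :: w) γ

/-- A path recorded together with the list of successive targets of its edges. -/
inductive PathVia (Γ : WordGraph A) : ℕ → List A → List ℕ → Prop
  | nil {α : ℕ} : α ∈ Γ.nodes → PathVia Γ α [] []
  | cons {α β : ℕ} {a : A} {w : List A} {γs : List ℕ} :
      (α, a, β) ∈ Γ.edges → PathVia Γ β w γs → PathVia Γ α (a :: w) (β :: γs)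

/-- The path relation `(α)π_Γ`. -/
def pathRel (Γ : WordGraph A) (α : ℕ) : Set (List A × List A) :=
  {p | ∃ β : ℕ, Γ.IsPath α p.1 β ∧ Γ.IsPath α p.2 β}

def Deterministic (Γ : WordGraph A) : Prop :=
  ∀ ⦃α : ℕ⦄ ⦃a : A⦄ ⦃β γ : ℕ⦄, (α, a, β) ∈ Γ.edges → (α, a, γ) ∈ Γ.edges → β = γ

def Complete (Γ : WordGraph A) : Prop :=
  ∀ α ∈ Γ.nodes, ∀ a : A, ∃ β : ℕ, (α, a, β) ∈ Γ.edges

def Compatible (Γ : WordGraph A) (W : Set (List A × List A)) : Prop :=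
  ∀ α ∈ Γ.nodes, W ⊆ Γ.pathRel α

end WordGraph

/-- `min (α/κ)`: the minimum element of the `κ`-class of `α` inside `N`. -/
noncomputable def classMin (N : Set ℕ) (κ : ℕ → ℕ → Prop) (α : ℕ) : ℕ :=
  sInf {β : ℕ | β ∈ N ∧ κ α β}

/-- The quotient of a word graph by an equivalence relation on its nodes. -/
def WordGraph.quot {A : Type*} (Γ : WordGraph A) (κ : ℕ → ℕ → Prop) : WordGraph A where
  nodes := classMin Γ.nodes κ '' Γ.nodes
  edges := {e : ℕ × A × ℕ | ∃ p ∈ Γ.edges,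
      e = (classMin Γ.nodes κ p.1, p.2.1, classMin Γ.nodes κ p.2.2)}

/-- `κ` is an equivalence relation on the set `N` (represented as a relation on `ℕ`
whose related elements lie in `N`). -/
def IsEquivOn (N : Set ℕ) (κ : ℕ → ℕ → Prop) : Prop :=
  (∀ ⦃x y : ℕ⦄, κ x y → x ∈ N ∧ y ∈ N) ∧ (∀ x ∈ N, κ x x) ∧
    (∀ ⦃x y : ℕ⦄, κ x y → κ y x) ∧ (∀ ⦃x y z : ℕ⦄, κ x y → κ y z → κ x z)

/-- `κ` is the trivial equivalence (the diagonal) on `N`. -/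
def TrivialOn (N : Set ℕ) (κ : ℕ → ℕ → Prop) : Prop :=
  ∀ x y : ℕ, κ x y ↔ (x = y ∧ x ∈ N)

/-- `κ` is the least equivalence relation on `N` containing `base`. -/
def LeastEquivOn (N : Set ℕ) (base κ : ℕ → ℕ → Prop) : Prop :=
  IsEquivOn N κ ∧ (∀ ⦃x y : ℕ⦄, base x y → κ x y) ∧
    ∀ σ : ℕ → ℕ → Prop, IsEquivOn N σ → (∀ ⦃x y : ℕ⦄, base x y → σ x y) →
      ∀ ⦃x y : ℕ⦄, κ x y → σ x y

section congruences

variable {A : Type*}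

def IsCongruence (σ : List A → List A → Prop) : Prop :=
  Equivalence σ ∧ (∀ u v w : List A, σ u v → σ (u ++ w) (v ++ w)) ∧
    (∀ u v w : List A, σ u v → σ (w ++ u) (w ++ v))

def IsRightCongruence (σ : List A → List A → Prop) : Prop :=
  Equivalence σ ∧ ∀ u v w : List A, σ u v → σ (u ++ w) (v ++ w)

def IsLeftCongruence (σ : List A → List A → Prop) : Prop :=
  Equivalence σ ∧ ∀ u v w : List A, σ u v → σ (w ++ u) (w ++ v)

def IsLeastCongruenceContaining (X : Set (List A × List A))
    (σ : List A → List A → Prop) : Prop :=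
  IsCongruence σ ∧ (∀ p ∈ X, σ p.1 p.2) ∧
    ∀ τ : List A → List A → Prop, IsCongruence τ → (∀ p ∈ X, τ p.1 p.2) →
      ∀ u v : List A, σ u v → τ u v

def IsLeastRightCongruenceContaining (X : Set (List A × List A))
    (σ : List A → List A → Prop) : Prop :=
  IsRightCongruence σ ∧ (∀ p ∈ X, σ p.1 p.2) ∧
    ∀ τ : List A → List A → Prop, IsRightCongruence τ → (∀ p ∈ X, τ p.1 p.2) →
      ∀ u v : List A, σ u v → τ u v

def IsLeastLeftCongruenceContaining (X : Set (List A × List A))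
    (σ : List A → List A → Prop) : Prop :=
  IsLeftCongruence σ ∧ (∀ p ∈ X, σ p.1 p.2) ∧
    ∀ τ : List A → List A → Prop, IsLeftCongruence τ → (∀ p ∈ X, τ p.1 p.2) →
      ∀ u v : List A, σ u v → τ u v

end congruences

section steps

variable {A : Type*}

/-- Step TC1 with the new node `fresh`: define a new node together with a new
edge `(α, a, fresh)` where `α` had no edge labelled by `a`. -/
def TC1 (fresh : ℕ) (Γ : WordGraph A) (κ : ℕ → ℕ → Prop)
    (Γ' : WordGraph A) (κ' : ℕ → ℕ → Prop) : Prop :=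
  ∃ (α : ℕ) (a : A), α ∈ Γ.nodes ∧ (∀ β : ℕ, (α, a, β) ∉ Γ.edges) ∧
    Γ'.nodes = insert fresh Γ.nodes ∧
    Γ'.edges = insert (α, a, fresh) Γ.edges ∧
    ∀ x y : ℕ, κ' x y ↔ (κ x y ∨ (x = fresh ∧ y = fresh))

/-- Step TC1 applied at the specific node `α₀`. -/
def TC1At (α₀ fresh : ℕ) (Γ : WordGraph A) (κ : ℕ → ℕ → Prop)
    (Γ' : WordGraph A) (κ' : ℕ → ℕ → Prop) : Prop :=
  ∃ a : A, α₀ ∈ Γ.nodes ∧ (∀ β : ℕ, (α₀, a, β) ∉ Γ.edges) ∧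
    Γ'.nodes = insert fresh Γ.nodes ∧
    Γ'.edges = insert (α₀, a, fresh) Γ.edges ∧
    ∀ x y : ℕ, κ' x y ↔ (κ x y ∨ (x = fresh ∧ y = fresh))

/-- Step TC2, applied with a relation `(u, v) ∈ W` at a node belonging to `allowed`;
the three mutually exclusive cases (a), (b), (c) appear as the three disjuncts. -/
def TC2 (W : Set (List A × List A)) (allowed : Set ℕ)
    (Γ : WordGraph A) (κ : ℕ → ℕ → Prop)
    (Γ' : WordGraph A) (κ' : ℕ → ℕ → Prop) : Prop :=
  ∃ (α : ℕ) (u v : List A), α ∈ allowed ∧ α ∈ Γ.nodes ∧ (u, v) ∈ W ∧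
    u ≠ [] ∧ v ≠ [] ∧
    ((∃ (v₁ : List A) (b : A) (β γ : ℕ), v = v₁ ++ [b] ∧
        Γ.IsPath α u β ∧ Γ.IsPath α v₁ γ ∧ (∀ δ : ℕ, (γ, b, δ) ∉ Γ.edges) ∧
        Γ'.nodes = Γ.nodes ∧ Γ'.edges = insert (γ, b, β) Γ.edges ∧
        (∀ x y : ℕ, κ' x y ↔ κ x y)) ∨
      (∃ (u₁ : List A) (a : A) (β γ : ℕ), u = u₁ ++ [a] ∧
        Γ.IsPath α u₁ β ∧ Γ.IsPath α v γ ∧ (∀ δ : ℕ, (β, a, δ) ∉ Γ.edges) ∧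
        Γ'.nodes = Γ.nodes ∧ Γ'.edges = insert (β, a, γ) Γ.edges ∧
        (∀ x y : ℕ, κ' x y ↔ κ x y)) ∨
      (∃ β γ : ℕ, Γ.IsPath α u β ∧ Γ.IsPath α v γ ∧ β ≠ γ ∧
        Γ' = Γ ∧
        LeastEquivOn Γ.nodes (fun x y => κ x y ∨ (x = β ∧ y = γ)) κ'))

/-- Step TC3: replace `Γ` by its quotient by `κ`, and replace `κ` by the least
equivalence generated by the remaining non-deterministic pairs of edges. -/
def TC3 (Γ : WordGraph A) (κ : ℕ → ℕ → Prop)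
    (Γ' : WordGraph A) (κ' : ℕ → ℕ → Prop) : Prop :=
  Γ' = Γ.quot κ ∧
    LeastEquivOn Γ'.nodes
      (fun β γ => β ≠ γ ∧ ∃ (α : ℕ) (a : A), (α, a, β) ∈ Γ'.edges ∧ (α, a, γ) ∈ Γ'.edges)
      κ'

end steps

/-- A run of the Todd–Coxeter process: a sequence of word graphs together with
equivalence relations on their node sets. -/
structure Run (A : Type*) where
  graph : ℕ → WordGraph A
  kappa : ℕ → ℕ → ℕ → Prop

namespace Run

variable {A : Type*}

/-- All nodes used up to and including step `i`. -/
def used (run : Run A) (i : ℕ) : Set ℕ :=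
  ⋃ j ∈ Set.Iic i, (run.graph j).nodes

/-- The new node introduced by TC1 at step `i`: one plus the maximum of all
nodes used so far. -/
noncomputable def fresh (run : Run A) (i : ℕ) : ℕ :=
  sSup (run.used i) + 1

/-- Step `i` of a run is an application of TC1, of TC2 (with a relation of `R`
at any node, or with a relation of `S` at the node `0`), or of TC3. -/
def Step (R S : Set (List A × List A)) (run : Run A) (i : ℕ) : Prop :=
  TC1 (run.fresh i) (run.graph i) (run.kappa i) (run.graph (i+1)) (run.kappa (i+1)) ∨
  TC2 R Set.univ (run.graph i) (run.kappa i) (run.graph (i+1)) (run.kappa (i+1)) ∨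
  TC2 S {0} (run.graph i) (run.kappa i) (run.graph (i+1)) (run.kappa (i+1)) ∨
  TC3 (run.graph i) (run.kappa i) (run.graph (i+1)) (run.kappa (i+1))

end Run

/-- A congruence enumeration for the least right congruence `ρ` containing
`R^# ∪ S`, with input `(run.graph 0, run.kappa 0)`. -/
structure IsEnumeration {A : Type*} (R S : Set (List A × List A))
    (ρ : List A → List A → Prop) (run : Run A) : Prop where
  valid : (run.graph 0).Valid
  init_pathRel : ∀ p ∈ (run.graph 0).pathRel 0, ρ p.1 p.2
  init_kappa : TrivialOn (run.graph 0).nodes (run.kappa 0)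
  steps : ∀ i : ℕ, run.Step R S i
  init_S : ∃ m : ℕ, ∀ p ∈ S, ∃ β γ : ℕ, (run.graph m).IsPath 0 p.1 β ∧
      (run.graph m).IsPath 0 p.2 γ ∧ (β = γ ∨ run.kappa m β γ)
  fair_c : ∀ i : ℕ, ∀ α ∈ (run.graph i).nodes, ∀ a : A,
      (∀ β : ℕ, (α, a, β) ∉ (run.graph i).edges) →
      ∃ j : ℕ, i ≤ j ∧ (α ∉ (run.graph j).nodes ∨ ∃ β : ℕ, (α, a, β) ∈ (run.graph j).edges)
  fair_d : ∀ i : ℕ, ∀ α ∈ (run.graph i).nodes, ∀ p ∈ R,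
      ∃ j : ℕ, i ≤ j ∧ (α ∉ (run.graph j).nodes ∨ p ∈ (run.graph j).pathRel α)
  fair_e : ∀ i : ℕ, ¬ TrivialOn (run.graph i).nodes (run.kappa i) →
      ∃ j : ℕ, i ≤ j ∧ TrivialOn (run.graph j).nodes (run.kappa j)

/-- The enumeration has terminated at step `i`: applying any of TC1, TC2, TC3
to `(Γᵢ, κᵢ)` results in no change. -/
def TerminatedAt {A : Type*} (R S : Set (List A × List A)) (run : Run A) (i : ℕ) : Prop :=
  ∀ (Γ' : WordGraph A) (κ' : ℕ → ℕ → Prop),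
    (TC1 (run.fresh i) (run.graph i) (run.kappa i) Γ' κ' ∨
      TC2 R Set.univ (run.graph i) (run.kappa i) Γ' κ' ∨
      TC2 S {0} (run.graph i) (run.kappa i) Γ' κ' ∨
      TC3 (run.graph i) (run.kappa i) Γ' κ') →
    Γ' = run.graph i ∧ ∀ x y : ℕ, κ' x y ↔ run.kappa i x y

section Aux

variable {A : Type*}

open WordGraph

lemma isPath_mono {Γ Δ : WordGraph A} (hn : Γ.nodes ⊆ Δ.nodes) (he : Γ.edges ⊆ Δ.edges)
    {α β : ℕ} {w : List A} (h : Γ.IsPath α w β) : Δ.IsPath α w β := by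
  induction h with
  | nil h => exact .nil (hn h)
  | cons e _ ih => exact .cons (he e) ih

lemma pathRel_mono {Γ Δ : WordGraph A} (hn : Γ.nodes ⊆ Δ.nodes) (he : Γ.edges ⊆ Δ.edges)
    {α : ℕ} : Γ.pathRel α ⊆ Δ.pathRel α := by
  rintro p ⟨β, h1, h2⟩
  exact ⟨β, isPath_mono hn he h1, isPath_mono hn he h2⟩

lemma isPath_end_mem {Γ : WordGraph A} {α β : ℕ} {w : List A} (h : Γ.IsPath α w β) :
    β ∈ Γ.nodes := by
  induction h with
  | nil h => exact h
  | cons _ _ ih => exact ih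

lemma isPath_append {Γ : WordGraph A} {α β γ : ℕ} {w₁ w₂ : List A}
    (h1 : Γ.IsPath α w₁ β) : Γ.IsPath β w₂ γ → Γ.IsPath α (w₁ ++ w₂) γ := by
  induction h1 with
  | nil _ => exact id
  | cons e _ ih => exact fun h2 => .cons e (ih h2)

lemma isPath_nil' {Γ : WordGraph A} {α β : ℕ} (h : Γ.IsPath α [] β) : α = β := by
  cases h; rfl

lemma isPath_snoc {Γ : WordGraph A} (hv : ∀ e ∈ Γ.edges, e.1 ∈ Γ.nodes)
    {α β : ℕ} {c : A} {w : List A} (h : Γ.IsPath α (w ++ [c]) β) :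
    ∃ γ, Γ.IsPath α w γ ∧ (γ, c, β) ∈ Γ.edges := by
  induction w generalizing α with
  | nil =>
    cases h with
    | cons e h' =>
      cases h' with
      | nil _ => exact ⟨α, .nil (hv _ e), e⟩
  | cons d w ih =>
    cases h with
    | cons e h' =>
      obtain ⟨γ, hp, hee⟩ := ih h'
      exact ⟨γ, .cons e hp, hee⟩

lemma classMin_spec {N : Set ℕ} {κ : ℕ → ℕ → Prop} (hrefl : ∀ x ∈ N, κ x x)
    {α : ℕ} (hα : α ∈ N) : classMin N κ α ∈ N ∧ κ α (classMin N κ α) :=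
  Nat.sInf_mem (⟨α, hα, hrefl α hα⟩ : {β | β ∈ N ∧ κ α β}.Nonempty)

lemma classMin_zero {N : Set ℕ} {κ : ℕ → ℕ → Prop} (h0 : 0 ∈ N)
    (hrefl : ∀ x ∈ N, κ x x) : classMin N κ 0 = 0 :=
  Nat.sInf_eq_zero.mpr (Or.inl ⟨h0, hrefl 0 h0⟩)

lemma classMin_congr {N : Set ℕ} {κ : ℕ → ℕ → Prop} (hκ : IsEquivOn N κ) {α β : ℕ}
    (h : κ α β) : classMin N κ α = classMin N κ β := by
  obtain ⟨hdom, hrefl, hsymm, htrans⟩ := hκ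
  unfold classMin
  congr 1
  ext e
  exact ⟨fun ⟨h1, h2⟩ => ⟨h1, htrans (hsymm h) h2⟩, fun ⟨h1, h2⟩ => ⟨h1, htrans h h2⟩⟩

lemma rel_of_classMin_eq {N : Set ℕ} {κ : ℕ → ℕ → Prop} (hκ : IsEquivOn N κ) {α β : ℕ}
    (hα : α ∈ N) (hβ : β ∈ N) (h : classMin N κ α = classMin N κ β) : κ α β := by
  have h1 := (classMin_spec hκ.2.1 hα).2
  have h2 := (classMin_spec hκ.2.1 hβ).2
  rw [h] at h1
  exact hκ.2.2.2 h1 (hκ.2.2.1 h2)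

lemma isPath_quot {Γ : WordGraph A} {κ : ℕ → ℕ → Prop} {α β : ℕ} {w : List A}
    (h : Γ.IsPath α w β) :
    (Γ.quot κ).IsPath (classMin Γ.nodes κ α) w (classMin Γ.nodes κ β) := by
  induction h with
  | nil h => exact .nil ⟨_, h, rfl⟩
  | cons e _ ih => exact .cons ⟨_, e, rfl⟩ ih

lemma isPath_quot_mono {Γ : WordGraph A} {κ κ' : ℕ → ℕ → Prop}
    (hv : ∀ e ∈ Γ.edges, e.1 ∈ Γ.nodes ∧ e.2.2 ∈ Γ.nodes)
    (hκ : IsEquivOn Γ.nodes κ) (hκ' : IsEquivOn Γ.nodes κ')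
    (hsubκ : ∀ ⦃x y⦄, κ x y → κ' x y)
    {p q : ℕ} {w : List A} (h : (Γ.quot κ).IsPath p w q) :
    (Γ.quot κ').IsPath (classMin Γ.nodes κ' p) w (classMin Γ.nodes κ' q) := by
  induction h with
  | nil h =>
    obtain ⟨x, hx, rfl⟩ := h
    rw [classMin_congr hκ' (hκ'.2.2.1 (hsubκ (classMin_spec hκ.2.1 hx).2))]
    exact .nil ⟨x, hx, rfl⟩
  | @cons p m q a w e hp ih =>
    obtain ⟨pp, hpp, heq⟩ := e
    injection heq with h1 h23
    injection h23 with h2 h3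
    subst h1 h2 h3
    have e1 : classMin Γ.nodes κ' (classMin Γ.nodes κ pp.1) = classMin Γ.nodes κ' pp.1 :=
      (classMin_congr hκ' (hsubκ (classMin_spec hκ.2.1 (hv _ hpp).1).2)).symm
    have e2 : classMin Γ.nodes κ' (classMin Γ.nodes κ pp.2.2) = classMin Γ.nodes κ' pp.2.2 :=
      (classMin_congr hκ' (hsubκ (classMin_spec hκ.2.1 (hv _ hpp).2).2)).symm
    rw [e1]
    rw [e2] at ih
    exact .cons ⟨pp, hpp, rfl⟩ ih

lemma quot_translate {Γ : WordGraph A} {κ : ℕ → ℕ → Prop} {ρ : List A → List A → Prop}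
    (hrρ : IsRightCongruence ρ)
    (hv : ∀ e ∈ Γ.edges, e.1 ∈ Γ.nodes ∧ e.2.2 ∈ Γ.nodes)
    (h0 : 0 ∈ Γ.nodes) (hκ : IsEquivOn Γ.nodes κ)
    (hreach : ∀ x ∈ Γ.nodes, ∃ t, Γ.IsPath 0 t x)
    (hacc : ∀ ⦃x y⦄, κ x y → ∀ ⦃wx wy⦄, Γ.IsPath 0 wx x → Γ.IsPath 0 wy y → ρ wx wy) :
    ∀ w p, (Γ.quot κ).IsPath 0 w p →
      ∃ x w', classMin Γ.nodes κ x = p ∧ Γ.IsPath 0 w' x ∧ ρ w w' := by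
  have hvq : ∀ e ∈ (Γ.quot κ).edges, e.1 ∈ (Γ.quot κ).nodes := by
    rintro e ⟨pp, hpp, rfl⟩
    exact ⟨pp.1, (hv _ hpp).1, rfl⟩
  intro w
  induction w using List.reverseRecOn with
  | nil =>
    intro p hp
    have h := isPath_nil' hp
    exact ⟨0, [], by rw [← h]; exact classMin_zero h0 hκ.2.1, .nil h0, hrρ.1.refl []⟩
  | append_singleton w c ih =>
    intro p hp
    obtain ⟨q, hq, he⟩ := isPath_snoc hvq hp
    obtain ⟨x, w', hxq, hw', hρw⟩ := ih q hq
    obtain ⟨pp, hpp, heq⟩ := he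
    injection heq with h1 h23
    injection h23 with h2 h3
    obtain ⟨t, ht⟩ := hreach pp.1 (hv _ hpp).1
    have hκx : κ x pp.1 :=
      rel_of_classMin_eq hκ (isPath_end_mem hw') (hv _ hpp).1 (hxq.trans h1)
    have hρt : ρ w' t := hacc hκx hw' ht
    have hedge : (pp.1, c, pp.2.2) ∈ Γ.edges := by rw [h2]; exact hpp
    refine ⟨pp.2.2, t ++ [c], h3.symm,
      isPath_append ht (.cons hedge (.nil (hv _ hpp).2)), ?_⟩
    exact hrρ.1.trans (hrρ.2 _ _ [c] hρw) (hrρ.2 _ _ [c] hρt)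

lemma quot_pathRel_subset {Γ : WordGraph A} {κ : ℕ → ℕ → Prop} {ρ : List A → List A → Prop}
    (hrρ : IsRightCongruence ρ)
    (hv : ∀ e ∈ Γ.edges, e.1 ∈ Γ.nodes ∧ e.2.2 ∈ Γ.nodes)
    (h0 : 0 ∈ Γ.nodes) (hκ : IsEquivOn Γ.nodes κ)
    (hreach : ∀ x ∈ Γ.nodes, ∃ t, Γ.IsPath 0 t x)
    (hacc : ∀ ⦃x y⦄, κ x y → ∀ ⦃wx wy⦄, Γ.IsPath 0 wx x → Γ.IsPath 0 wy y → ρ wx wy) :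
    ∀ pr ∈ (Γ.quot κ).pathRel 0, ρ pr.1 pr.2 := by
  rintro ⟨w₁, w₂⟩ ⟨p, hp1, hp2⟩
  obtain ⟨x₁, w₁', hx1, hq1, hρ1⟩ := quot_translate hrρ hv h0 hκ hreach hacc w₁ p hp1
  obtain ⟨x₂, w₂', hx2, hq2, hρ2⟩ := quot_translate hrρ hv h0 hκ hreach hacc w₂ p hp2
  have hκ12 : κ x₁ x₂ :=
    rel_of_classMin_eq hκ (isPath_end_mem hq1) (isPath_end_mem hq2) (hx1.trans hx2.symm)
  exact hrρ.1.trans hρ1 (hrρ.1.trans (hacc hκ12 hq1 hq2) (hrρ.1.symm hρ2))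

lemma insert_edge_translate {Γ Γ' : WordGraph A} {ρ : List A → List A → Prop}
    (hrρ : IsRightCongruence ρ)
    (hv : ∀ e ∈ Γ.edges, e.1 ∈ Γ.nodes ∧ e.2.2 ∈ Γ.nodes) (h0 : 0 ∈ Γ.nodes)
    {γ₀ β₀ : ℕ} {c₀ : A} (hγ₀ : γ₀ ∈ Γ.nodes)
    (hn : Γ'.nodes = Γ.nodes) (he : Γ'.edges = insert (γ₀, c₀, β₀) Γ.edges)
    (hkey : ∀ ⦃w⦄, Γ.IsPath 0 w γ₀ → ∃ w'', Γ.IsPath 0 w'' β₀ ∧ ρ (w ++ [c₀]) w'') :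
    ∀ w δ, Γ'.IsPath 0 w δ → ∃ w', Γ.IsPath 0 w' δ ∧ ρ w w' := by
  have hv' : ∀ e ∈ Γ'.edges, e.1 ∈ Γ'.nodes := by
    rw [he, hn]
    rintro e (rfl | hmem)
    · exact hγ₀
    · exact (hv _ hmem).1
  intro w
  induction w using List.reverseRecOn with
  | nil =>
    intro δ hδ
    have h := isPath_nil' hδ
    exact ⟨[], h ▸ .nil h0, hrρ.1.refl []⟩
  | append_singleton w c ih =>
    intro δ hδ
    obtain ⟨q, hq, hedge⟩ := isPath_snoc hv' hδ
    obtain ⟨w', hw', hρw⟩ := ih q hq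
    rw [he] at hedge
    rcases hedge with heq | hmem
    · injection heq with h1 h23
      injection h23 with h2 h3
      subst h1 h2 h3
      obtain ⟨w'', hw'', hρ''⟩ := hkey hw'
      exact ⟨w'', hw'', hrρ.1.trans (hrρ.2 _ _ _ hρw) hρ''⟩
    · exact ⟨w' ++ [c], isPath_append hw' (.cons hmem (.nil (hv _ hmem).2)),
        hrρ.2 _ _ [c] hρw⟩

lemma tc1_path {Γ Γ' : WordGraph A} {fr α₀ : ℕ} {a₀ : A}
    (hv : ∀ e ∈ Γ.edges, e.1 ∈ Γ.nodes ∧ e.2.2 ∈ Γ.nodes)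
    (hfr : fr ∉ Γ.nodes) (hα₀ : α₀ ∈ Γ.nodes)
    (hn : Γ'.nodes = insert fr Γ.nodes) (he : Γ'.edges = insert (α₀, a₀, fr) Γ.edges) :
    ∀ {s w δ}, Γ'.IsPath s w δ → s ∈ Γ.nodes →
      Γ.IsPath s w δ ∨ (δ = fr ∧ ∃ w₁, w = w₁ ++ [a₀] ∧ Γ.IsPath s w₁ α₀) := by
  intro s w δ h
  induction h with
  | nil _ => exact fun hs => Or.inl (.nil hs)
  | @cons s m δ a w e hp ih =>
    intro hs
    rw [he] at e
    rcases e with heq | hmem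
    · injection heq with h1 h23
      injection h23 with h2 h3
      subst h1 h2 h3
      have hw : w = [] ∧ δ = m := by
        cases hp with
        | nil _ => exact ⟨rfl, rfl⟩
        | cons e' _ =>
          exfalso
          rw [he] at e'
          rcases e' with heq' | hmem'
          · injection heq' with hh _
            exact hfr (hh ▸ hα₀)
          · exact hfr (hv _ hmem').1
      obtain ⟨rfl, rfl⟩ := hw
      exact Or.inr ⟨rfl, [], rfl, .nil hs⟩
    · rcases ih (hv _ hmem).2 with h | ⟨rfl, w₁, rfl, hp'⟩
      · exact Or.inl (.cons hmem h)
      · exact Or.inr ⟨rfl, a :: w₁, rfl, .cons hmem hp'⟩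

end Aux

/-- Applying TC1, TC2 or TC3 preserves `(0)π_Γ ⊆ ρ` and
`(0)π_{Γ/κ} ⊆ ρ`, and both path relations can only grow. -/
theorem statement_9 {A : Type*} [Fintype A] (R S : Set (List A × List A))
    (hRfin : R.Finite) (hSfin : S.Finite)
    (Rsharp ρ : List A → List A → Prop)
    (hRsharp : IsLeastCongruenceContaining R Rsharp)
    (hρ : IsLeastRightCongruenceContaining ({p : List A × List A | Rsharp p.1 p.2} ∪ S) ρ)
    (Γ Γ' : WordGraph A) (κ κ' : ℕ → ℕ → Prop)
    (hΓ : Γ.Valid) (hκ : IsEquivOn Γ.nodes κ)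
    (used : Set ℕ) (husedfin : used.Finite) (hsub : Γ.nodes ⊆ used)
    (hreach : ∀ β ∈ Γ.nodes, ∃ w : List A, Γ.IsPath 0 w β)
    (h₁ : ∀ p ∈ Γ.pathRel 0, ρ p.1 p.2)
    (h₂ : ∀ p ∈ (Γ.quot κ).pathRel 0, ρ p.1 p.2)
    (hstep : TC1 (sSup used + 1) Γ κ Γ' κ' ∨ TC2 R Set.univ Γ κ Γ' κ' ∨ TC3 Γ κ Γ' κ') :
    Γ.pathRel 0 ⊆ Γ'.pathRel 0 ∧ (∀ p ∈ Γ'.pathRel 0, ρ p.1 p.2) ∧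
    (Γ.quot κ).pathRel 0 ⊆ (Γ'.quot κ').pathRel 0 ∧
    (∀ p ∈ (Γ'.quot κ').pathRel 0, ρ p.1 p.2) := by
  have hρrc : IsRightCongruence ρ := hρ.1
  have ρeq : Equivalence ρ := hρ.1.1
  have ρapp : ∀ u v w : List A, ρ u v → ρ (u ++ w) (v ++ w) := hρ.1.2
  have hρRs : ∀ {u v : List A}, Rsharp u v → ρ u v := fun {u v} h => hρ.2.1 (u, v) (Or.inl h)
  have hρR : ∀ {u v : List A}, (u, v) ∈ R → ∀ t, ρ (t ++ u) (t ++ v) := by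
    intro u v huv t
    exact hρRs (hRsharp.1.2.2 u v t (hRsharp.2.1 (u, v) huv))
  have hv := hΓ.2.2
  have h0 : 0 ∈ Γ.nodes := hΓ.2.1
  have hq0 : classMin Γ.nodes κ 0 = 0 := classMin_zero h0 hκ.2.1
  have haccκ : ∀ ⦃x y⦄, κ x y → ∀ ⦃wx wy⦄, Γ.IsPath 0 wx x → Γ.IsPath 0 wy y →
      ρ wx wy := by
    intro x y hxy wx wy hwx hwy
    have p1 := isPath_quot (κ := κ) hwx
    have p2 := isPath_quot (κ := κ) hwy
    rw [hq0] at p1 p2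
    rw [classMin_congr hκ hxy] at p1
    exact h₂ (wx, wy) ⟨_, p1, p2⟩
  rcases hstep with htc1 | htc2 | htc3
  · -- TC1
    obtain ⟨α₀, a₀, hα₀, hno, hn, he, hκ'iff⟩ := htc1
    have hfr : sSup used + 1 ∉ Γ.nodes := by
      intro hmem
      have hle : sSup used + 1 ≤ sSup used := le_csSup husedfin.bddAbove (hsub hmem)
      omega
    set fr := sSup used + 1 with hfrdef
    have hnsub : Γ.nodes ⊆ Γ'.nodes := by rw [hn]; exact Set.subset_insert _ _
    have hesub : Γ.edges ⊆ Γ'.edges := by rw [he]; exact Set.subset_insert _ _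
    have hκ' : IsEquivOn Γ'.nodes κ' := by
      rw [hn]
      refine ⟨?_, ?_, ?_, ?_⟩
      · intro x y hxy
        rcases (hκ'iff x y).1 hxy with h | ⟨rfl, rfl⟩
        · exact ⟨Set.mem_insert_of_mem _ (hκ.1 h).1, Set.mem_insert_of_mem _ (hκ.1 h).2⟩
        · exact ⟨Set.mem_insert _ _, Set.mem_insert _ _⟩
      · rintro x (rfl | hx)
        · exact (hκ'iff fr fr).2 (Or.inr ⟨rfl, rfl⟩)
        · exact (hκ'iff x x).2 (Or.inl (hκ.2.1 x hx))
      · intro x y hxy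
        rcases (hκ'iff x y).1 hxy with h | ⟨rfl, rfl⟩
        · exact (hκ'iff y x).2 (Or.inl (hκ.2.2.1 h))
        · exact hxy
      · intro x y z h1 h2
        rcases (hκ'iff x y).1 h1 with h1' | ⟨rfl, rfl⟩
        · rcases (hκ'iff y z).1 h2 with h2' | ⟨rfl, rfl⟩
          · exact (hκ'iff x z).2 (Or.inl (hκ.2.2.2 h1' h2'))
          · exact absurd (hκ.1 h1').2 hfr
        · rcases (hκ'iff fr z).1 h2 with h2' | ⟨-, rfl⟩
          · exact absurd (hκ.1 h2').1 hfr
          · exact h1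
    have hcm : ∀ x ∈ Γ.nodes, classMin Γ'.nodes κ' x = classMin Γ.nodes κ x := by
      intro x hx
      have hxfr : x ≠ fr := fun h => hfr (h ▸ hx)
      unfold classMin
      congr 1
      ext e
      simp only [Set.mem_setOf_eq, hn, Set.mem_insert_iff, hκ'iff]
      constructor
      · rintro ⟨he', hrel | ⟨rfl, rfl⟩⟩
        · exact ⟨(hκ.1 hrel).2, hrel⟩
        · exact absurd rfl hxfr
      · rintro ⟨he', hrel⟩
        exact ⟨Or.inr he', Or.inl hrel⟩
    have hv' : ∀ e ∈ Γ'.edges, e.1 ∈ Γ'.nodes ∧ e.2.2 ∈ Γ'.nodes := by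
      rw [he, hn]
      rintro e (rfl | hmem)
      · exact ⟨Set.mem_insert_of_mem _ hα₀, Set.mem_insert _ _⟩
      · exact ⟨Set.mem_insert_of_mem _ (hv _ hmem).1, Set.mem_insert_of_mem _ (hv _ hmem).2⟩
    have h0' : 0 ∈ Γ'.nodes := hnsub h0
    have hfrn : fr ∈ Γ'.nodes := by rw [hn]; exact Set.mem_insert _ _
    have hreach' : ∀ x ∈ Γ'.nodes, ∃ t, Γ'.IsPath 0 t x := by
      intro x hx
      rw [hn] at hx
      rcases hx with rfl | hx
      · obtain ⟨t, ht⟩ := hreach α₀ hα₀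
        exact ⟨t ++ [a₀], isPath_append (isPath_mono hnsub hesub ht)
          (.cons (by rw [he]; exact Set.mem_insert _ _) (.nil hfrn))⟩
      · obtain ⟨t, ht⟩ := hreach x hx
        exact ⟨t, isPath_mono hnsub hesub ht⟩
    have hacc' : ∀ ⦃x y⦄, κ' x y → ∀ ⦃wx wy⦄, Γ'.IsPath 0 wx x → Γ'.IsPath 0 wy y →
        ρ wx wy := by
      intro x y hxy wx wy hwx hwy
      rcases (hκ'iff x y).1 hxy with hrel | ⟨rfl, rfl⟩
      · rcases tc1_path hv hfr hα₀ hn he hwx h0 with p1 | ⟨hδ, _, _, _⟩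
        · rcases tc1_path hv hfr hα₀ hn he hwy h0 with p2 | ⟨hδ, _, _, _⟩
          · exact haccκ hrel p1 p2
          · exact absurd (hδ ▸ (hκ.1 hrel).2) hfr
        · exact absurd (hδ ▸ (hκ.1 hrel).1) hfr
      · rcases tc1_path hv hfr hα₀ hn he hwx h0 with p1 | ⟨_, u₁, rfl, p1⟩
        · exact absurd (isPath_end_mem p1) hfr
        · rcases tc1_path hv hfr hα₀ hn he hwy h0 with p2 | ⟨_, u₂, rfl, p2⟩
          · exact absurd (isPath_end_mem p2) hfr
          · exact ρapp _ _ [a₀] (h₁ (u₁, u₂) ⟨α₀, p1, p2⟩)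
    refine ⟨pathRel_mono hnsub hesub, ?_, ?_, ?_⟩
    · rintro ⟨w₁, w₂⟩ ⟨δ, hw₁, hw₂⟩
      rcases tc1_path hv hfr hα₀ hn he hw₁ h0 with p1 | ⟨rfl, u₁, rfl, p1⟩
      · rcases tc1_path hv hfr hα₀ hn he hw₂ h0 with p2 | ⟨hδ, _, _, _⟩
        · exact h₁ (w₁, w₂) ⟨δ, p1, p2⟩
        · exact absurd (hδ ▸ isPath_end_mem p1) hfr
      · rcases tc1_path hv hfr hα₀ hn he hw₂ h0 with p2 | ⟨_, u₂, rfl, p2⟩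
        · exact absurd (isPath_end_mem p2) hfr
        · exact ρapp _ _ [a₀] (h₁ (u₁, u₂) ⟨α₀, p1, p2⟩)
    · refine pathRel_mono ?_ ?_
      · rintro n ⟨x, hx, rfl⟩
        exact ⟨x, hnsub hx, hcm x hx⟩
      · rintro e ⟨p, hp, rfl⟩
        refine ⟨p, hesub hp, ?_⟩
        rw [hcm _ (hv _ hp).1, hcm _ (hv _ hp).2]
    · exact quot_pathRel_subset hρrc hv' h0' hκ' hreach' hacc'
  · -- TC2
    obtain ⟨α, u, v, -, hαmem, huv, -, -, hcase⟩ := htc2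
    obtain ⟨t, ht⟩ := hreach α hαmem
    rcases hcase with ⟨v₁, b, β, γ, hveq, hu, hv₁, -, hn, he, hκiff⟩ |
      ⟨u₁, a, β, γ, hueq, hu₁, hvp, -, hn, he, hκiff⟩ | ⟨β, γ, hu, hvp, -, hΓeq, hle⟩
    · -- TC2 (a): new edge (γ, b, β)
      have hkey : ∀ ⦃w⦄, Γ.IsPath 0 w γ → ∃ w'', Γ.IsPath 0 w'' β ∧ ρ (w ++ [b]) w'' := by
        intro w hw
        refine ⟨t ++ u, isPath_append ht hu, ?_⟩
        have h1 : ρ (w ++ [b]) ((t ++ v₁) ++ [b]) :=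
          ρapp _ _ [b] (h₁ (w, t ++ v₁) ⟨γ, hw, isPath_append ht hv₁⟩)
        have h3 : (t ++ v₁) ++ [b] = t ++ v := by rw [hveq, List.append_assoc]
        exact ρeq.trans (h3 ▸ h1) (ρeq.symm (hρR huv t))
      have htr := insert_edge_translate hρrc hv h0 (isPath_end_mem hv₁) hn he hkey
      have hnsub : Γ.nodes ⊆ Γ'.nodes := by rw [hn]
      have hesub : Γ.edges ⊆ Γ'.edges := by rw [he]; exact Set.subset_insert _ _
      have hcm : classMin Γ'.nodes κ' = classMin Γ.nodes κ := by
        funext x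
        unfold classMin
        congr 1
        ext e
        simp [hn, hκiff]
      have hκ' : IsEquivOn Γ'.nodes κ' := by
        rw [hn]
        exact ⟨fun x y h => hκ.1 ((hκiff x y).1 h),
          fun x hx => (hκiff x x).2 (hκ.2.1 x hx),
          fun x y h => (hκiff y x).2 (hκ.2.2.1 ((hκiff x y).1 h)),
          fun x y z h1 h2 => (hκiff x z).2 (hκ.2.2.2 ((hκiff x y).1 h1) ((hκiff y z).1 h2))⟩
      have hv' : ∀ e ∈ Γ'.edges, e.1 ∈ Γ'.nodes ∧ e.2.2 ∈ Γ'.nodes := by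
        rw [he, hn]
        rintro e (rfl | hmem)
        · exact ⟨isPath_end_mem hv₁, isPath_end_mem hu⟩
        · exact hv _ hmem
      have hreach' : ∀ x ∈ Γ'.nodes, ∃ t', Γ'.IsPath 0 t' x := by
        intro x hx
        rw [hn] at hx
        obtain ⟨t', ht'⟩ := hreach x hx
        exact ⟨t', isPath_mono hnsub hesub ht'⟩
      have hacc' : ∀ ⦃x y⦄, κ' x y → ∀ ⦃wx wy⦄, Γ'.IsPath 0 wx x → Γ'.IsPath 0 wy y →
          ρ wx wy := by
        intro x y hxy wx wy hwx hwy
        obtain ⟨wx', hpx, hρx⟩ := htr wx x hwx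
        obtain ⟨wy', hpy, hρy⟩ := htr wy y hwy
        exact ρeq.trans hρx (ρeq.trans (haccκ ((hκiff x y).1 hxy) hpx hpy) (ρeq.symm hρy))
      refine ⟨pathRel_mono hnsub hesub, ?_, ?_, ?_⟩
      · rintro ⟨w₁, w₂⟩ ⟨δ, hw₁, hw₂⟩
        obtain ⟨w₁', hp1, hρ1⟩ := htr w₁ δ hw₁
        obtain ⟨w₂', hp2, hρ2⟩ := htr w₂ δ hw₂
        exact ρeq.trans hρ1 (ρeq.trans (h₁ (w₁', w₂') ⟨δ, hp1, hp2⟩) (ρeq.symm hρ2))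
      · refine pathRel_mono ?_ ?_
        · rintro n ⟨x, hx, rfl⟩
          exact ⟨x, hnsub hx, by rw [hcm]⟩
        · rintro e ⟨p, hp, rfl⟩
          exact ⟨p, hesub hp, by rw [hcm]⟩
      · exact quot_pathRel_subset hρrc hv' (hnsub h0) hκ' hreach' hacc'
    · -- TC2 (b): new edge (β, a, γ)
      have hkey : ∀ ⦃w⦄, Γ.IsPath 0 w β → ∃ w'', Γ.IsPath 0 w'' γ ∧ ρ (w ++ [a]) w'' := by
        intro w hw
        refine ⟨t ++ v, isPath_append ht hvp, ?_⟩
        have h1 : ρ (w ++ [a]) ((t ++ u₁) ++ [a]) :=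
          ρapp _ _ [a] (h₁ (w, t ++ u₁) ⟨β, hw, isPath_append ht hu₁⟩)
        have h3 : (t ++ u₁) ++ [a] = t ++ u := by rw [hueq, List.append_assoc]
        exact ρeq.trans (h3 ▸ h1) (hρR huv t)
      have htr := insert_edge_translate hρrc hv h0 (isPath_end_mem hu₁) hn he hkey
      have hnsub : Γ.nodes ⊆ Γ'.nodes := by rw [hn]
      have hesub : Γ.edges ⊆ Γ'.edges := by rw [he]; exact Set.subset_insert _ _
      have hcm : classMin Γ'.nodes κ' = classMin Γ.nodes κ := by
        funext x
        unfold classMin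
        congr 1
        ext e
        simp [hn, hκiff]
      have hκ' : IsEquivOn Γ'.nodes κ' := by
        rw [hn]
        exact ⟨fun x y h => hκ.1 ((hκiff x y).1 h),
          fun x hx => (hκiff x x).2 (hκ.2.1 x hx),
          fun x y h => (hκiff y x).2 (hκ.2.2.1 ((hκiff x y).1 h)),
          fun x y z h1 h2 => (hκiff x z).2 (hκ.2.2.2 ((hκiff x y).1 h1) ((hκiff y z).1 h2))⟩
      have hv' : ∀ e ∈ Γ'.edges, e.1 ∈ Γ'.nodes ∧ e.2.2 ∈ Γ'.nodes := by
        rw [he, hn]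
        rintro e (rfl | hmem)
        · exact ⟨isPath_end_mem hu₁, isPath_end_mem hvp⟩
        · exact hv _ hmem
      have hreach' : ∀ x ∈ Γ'.nodes, ∃ t', Γ'.IsPath 0 t' x := by
        intro x hx
        rw [hn] at hx
        obtain ⟨t', ht'⟩ := hreach x hx
        exact ⟨t', isPath_mono hnsub hesub ht'⟩
      have hacc' : ∀ ⦃x y⦄, κ' x y → ∀ ⦃wx wy⦄, Γ'.IsPath 0 wx x → Γ'.IsPath 0 wy y →
          ρ wx wy := by
        intro x y hxy wx wy hwx hwy
        obtain ⟨wx', hpx, hρx⟩ := htr wx x hwx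
        obtain ⟨wy', hpy, hρy⟩ := htr wy y hwy
        exact ρeq.trans hρx (ρeq.trans (haccκ ((hκiff x y).1 hxy) hpx hpy) (ρeq.symm hρy))
      refine ⟨pathRel_mono hnsub hesub, ?_, ?_, ?_⟩
      · rintro ⟨w₁, w₂⟩ ⟨δ, hw₁, hw₂⟩
        obtain ⟨w₁', hp1, hρ1⟩ := htr w₁ δ hw₁
        obtain ⟨w₂', hp2, hρ2⟩ := htr w₂ δ hw₂
        exact ρeq.trans hρ1 (ρeq.trans (h₁ (w₁', w₂') ⟨δ, hp1, hp2⟩) (ρeq.symm hρ2))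
      · refine pathRel_mono ?_ ?_
        · rintro n ⟨x, hx, rfl⟩
          exact ⟨x, hnsub hx, by rw [hcm]⟩
        · rintro e ⟨p, hp, rfl⟩
          exact ⟨p, hesub hp, by rw [hcm]⟩
      · exact quot_pathRel_subset hρrc hv' (hnsub h0) hκ' hreach' hacc'
    · -- TC2 (c): merge β and γ
      rw [hΓeq]
      have hκ'e : IsEquivOn Γ.nodes κ' := hle.1
      have hsubκ : ∀ ⦃x y⦄, κ x y → κ' x y := fun x y h => hle.2.1 (Or.inl h)
      have hσeq : IsEquivOn Γ.nodes (fun x y => x ∈ Γ.nodes ∧ y ∈ Γ.nodes ∧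
          ∀ ⦃wx wy⦄, Γ.IsPath 0 wx x → Γ.IsPath 0 wy y → ρ wx wy) := by
        refine ⟨fun x y h => ⟨h.1, h.2.1⟩,
          fun x hx => ⟨hx, hx, fun wx wy h1 h2 => h₁ (wx, wy) ⟨x, h1, h2⟩⟩,
          fun x y h => ⟨h.2.1, h.1, fun wx wy h1 h2 => ρeq.symm (h.2.2 h2 h1)⟩,
          fun x y z h1 h2 => ⟨h1.1, h2.2.1, fun wx wz p1 p2 => ?_⟩⟩
        obtain ⟨t', ht'⟩ := hreach y h1.2.1
        exact ρeq.trans (h1.2.2 p1 ht') (h2.2.2 ht' p2)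
      have hσbase : ∀ ⦃x y⦄, (κ x y ∨ (x = β ∧ y = γ)) → x ∈ Γ.nodes ∧ y ∈ Γ.nodes ∧
          ∀ ⦃wx wy⦄, Γ.IsPath 0 wx x → Γ.IsPath 0 wy y → ρ wx wy := by
        rintro x y (hrel | ⟨rfl, rfl⟩)
        · exact ⟨(hκ.1 hrel).1, (hκ.1 hrel).2, fun wx wy p1 p2 => haccκ hrel p1 p2⟩
        · refine ⟨isPath_end_mem hu, isPath_end_mem hvp, fun wβ wγ p1 p2 => ?_⟩
          have h1' : ρ wβ (t ++ u) := h₁ (wβ, t ++ u) ⟨x, p1, isPath_append ht hu⟩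
          have h3' : ρ (t ++ v) wγ := h₁ (t ++ v, wγ) ⟨y, isPath_append ht hvp, p2⟩
          exact ρeq.trans h1' (ρeq.trans (hρR huv t) h3')
      have hacc' : ∀ ⦃x y⦄, κ' x y → ∀ ⦃wx wy⦄, Γ.IsPath 0 wx x → Γ.IsPath 0 wy y →
          ρ wx wy := fun x y h wx wy p1 p2 =>
        (hle.2.2 _ hσeq hσbase h).2.2 p1 p2
      have hq0' : classMin Γ.nodes κ' 0 = 0 := classMin_zero h0 hle.1.2.1
      refine ⟨Set.Subset.rfl, h₁, ?_, ?_⟩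
      · rintro ⟨w₁, w₂⟩ ⟨q, p1, p2⟩
        have m1 := isPath_quot_mono hv hκ hle.1 hsubκ p1
        have m2 := isPath_quot_mono hv hκ hle.1 hsubκ p2
        rw [hq0'] at m1 m2
        exact ⟨_, m1, m2⟩
      · exact quot_pathRel_subset hρrc hv h0 hle.1 hreach hacc'
  · -- TC3
    obtain ⟨hΓ'eq, hle⟩ := htc3
    subst hΓ'eq
    have hvQ : ∀ e ∈ (Γ.quot κ).edges, e.1 ∈ (Γ.quot κ).nodes ∧ e.2.2 ∈ (Γ.quot κ).nodes := by
      rintro e ⟨p, hp, rfl⟩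
      exact ⟨⟨p.1, (hv _ hp).1, rfl⟩, ⟨p.2.2, (hv _ hp).2, rfl⟩⟩
    have h0Q : 0 ∈ (Γ.quot κ).nodes := ⟨0, h0, hq0⟩
    have hreachQ : ∀ x ∈ (Γ.quot κ).nodes, ∃ t, (Γ.quot κ).IsPath 0 t x := by
      rintro x ⟨y, hy, rfl⟩
      obtain ⟨t, ht⟩ := hreach y hy
      have := isPath_quot (κ := κ) ht
      rw [hq0] at this
      exact ⟨t, this⟩
    have hσeq : IsEquivOn (Γ.quot κ).nodes (fun x y => x ∈ (Γ.quot κ).nodes ∧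
        y ∈ (Γ.quot κ).nodes ∧
        ∀ ⦃wx wy⦄, (Γ.quot κ).IsPath 0 wx x → (Γ.quot κ).IsPath 0 wy y → ρ wx wy) := by
      refine ⟨fun x y h => ⟨h.1, h.2.1⟩,
        fun x hx => ⟨hx, hx, fun wx wy h1 h2 => h₂ (wx, wy) ⟨x, h1, h2⟩⟩,
        fun x y h => ⟨h.2.1, h.1, fun wx wy h1 h2 => ρeq.symm (h.2.2 h2 h1)⟩,
        fun x y z h1 h2 => ⟨h1.1, h2.2.1, fun wx wz p1 p2 => ?_⟩⟩
      obtain ⟨t', ht'⟩ := hreachQ y h1.2.1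
      exact ρeq.trans (h1.2.2 p1 ht') (h2.2.2 ht' p2)
    have hσbase : ∀ ⦃x y⦄, (x ≠ y ∧ ∃ (α : ℕ) (a : A), (α, a, x) ∈ (Γ.quot κ).edges ∧
        (α, a, y) ∈ (Γ.quot κ).edges) → x ∈ (Γ.quot κ).nodes ∧ y ∈ (Γ.quot κ).nodes ∧
        ∀ ⦃wx wy⦄, (Γ.quot κ).IsPath 0 wx x → (Γ.quot κ).IsPath 0 wy y → ρ wx wy := by
      rintro x y ⟨-, α, a, e1, e2⟩
      refine ⟨(hvQ _ e1).2, (hvQ _ e2).2, fun wx wy p1 p2 => ?_⟩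
      obtain ⟨t', ht'⟩ := hreachQ α (hvQ _ e1).1
      have q1 : (Γ.quot κ).IsPath 0 (t' ++ [a]) x :=
        isPath_append ht' (.cons e1 (.nil (hvQ _ e1).2))
      have q2 : (Γ.quot κ).IsPath 0 (t' ++ [a]) y :=
        isPath_append ht' (.cons e2 (.nil (hvQ _ e2).2))
      exact ρeq.trans (h₂ (wx, t' ++ [a]) ⟨x, p1, q1⟩)
        (h₂ (t' ++ [a], wy) ⟨y, q2, p2⟩)
    have haccQ : ∀ ⦃x y⦄, κ' x y → ∀ ⦃wx wy⦄, (Γ.quot κ).IsPath 0 wx x →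
        (Γ.quot κ).IsPath 0 wy y → ρ wx wy := fun x y h wx wy p1 p2 =>
      (hle.2.2 _ hσeq hσbase h).2.2 p1 p2
    refine ⟨?_, h₂, ?_, ?_⟩
    · rintro ⟨w₁, w₂⟩ ⟨δ, p1, p2⟩
      have m1 := isPath_quot (κ := κ) p1
      have m2 := isPath_quot (κ := κ) p2
      rw [hq0] at m1 m2
      exact ⟨_, m1, m2⟩
    · have hq0' : classMin (Γ.quot κ).nodes κ' 0 = 0 := classMin_zero h0Q hle.1.2.1
      rintro ⟨w₁, w₂⟩ ⟨δ, p1, p2⟩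
      have m1 := isPath_quot (κ := κ') p1
      have m2 := isPath_quot (κ := κ') p2
      rw [hq0'] at m1 m2
      exact ⟨_, m1, m2⟩
    · exact quot_pathRel_subset hρrc hvQ h0Q hle.1 hreachQ haccQ

end TC
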